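/- Under the SU(2)-invariant Cayley ODE system, the functions Q(z₁,z₂,z₃,z₄)·(Im(z₁z₄-z₂z₃))², Re(z₁z₄-z₂z₃)·Im(z₁z₄-z₂z₃), Re(z₁·conj(z₃)+z₂·conj(z₄))·Im(z₁z₄-z₂z₃), and Im(z₁·conj(z₃)+z₂·conj(z₄))·Im(z₁z₄-z₂z₃) are all constant in t. -/

import Mathlib

/-!
Put s = Σ |zⱼ|² and read (z₁ z₂; z₃ z₄) as a 2×2 matrix, with determinant B = z₁z₄ - z₂z₃,
row product C = z₁ z̄₃ + z₂ z̄₄, column product E = z₁ z̄₂ + z₃ z̄₄ and column norm difference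
D = |z₁|² - |z₂|² + |z₃|² - |z₄|². Along the flow B' = 2s B̄ while C' = 2s C, E' = 2s E and
D' = 2s D. So Re B, Re C, Im C and D grow at rate 2s, the discriminant Q = D² + 4|E|² at
rate 4s, whereas Im B decays at rate 2s and (Im B)² at rate 4s. Each of the four products
pairs a growing factor with a decaying one at the same rate, hence has zero derivative.
-/

open Complex ComplexConjugate

theorem hasDerivAt_sq_of_hasDerivAt_mul_self {f : ℝ → ℝ} {c x : ℝ}
    (hf : HasDerivAt f (c * f x) x) : HasDerivAt (fun u => f u ^ 2) (2 * c * f x ^ 2) x :=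
  (hf.pow 2).congr_deriv (by ring)

theorem hasDerivAt_norm_sq_of_hasDerivAt_smul_self {F : Type*} [NormedAddCommGroup F]
    [InnerProductSpace ℝ F] {f : ℝ → F} {c x : ℝ} (hf : HasDerivAt f (c • f x) x) :
    HasDerivAt (fun u => ‖f u‖ ^ 2) (2 * c * ‖f x‖ ^ 2) x :=
  hf.norm_sq.congr_deriv (by rw [real_inner_smul_right, real_inner_self_eq_norm_sq]; ring)

theorem mul_eq_of_hasDerivAt_mul_self {f g a b : ℝ → ℝ}
    (hf : ∀ t, HasDerivAt f (a t * f t) t) (hg : ∀ t, HasDerivAt g (b t * g t) t)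
    (hab : ∀ t, a t + b t = 0) (t t₀ : ℝ) : f t * g t = f t₀ * g t₀ := by
  have hfg (t : ℝ) : HasDerivAt (fun u => f u * g u) 0 t :=
    ((hf t).mul (hg t)).congr_deriv (by linear_combination f t * g t * hab t)
  exact is_const_of_deriv_eq_zero (fun t => (hfg t).differentiableAt) (fun t => (hfg t).deriv)
    t t₀

theorem HasDerivAt.complex_re {f : ℝ → ℂ} {f' : ℂ} {x : ℝ} (h : HasDerivAt f f' x) :
    HasDerivAt (fun u => (f u).re) f'.re x :=
  reCLM.hasFDerivAt.comp_hasDerivAt x h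

theorem HasDerivAt.complex_im {f : ℝ → ℂ} {f' : ℂ} {x : ℝ} (h : HasDerivAt f f' x) :
    HasDerivAt (fun u => (f u).im) f'.im x :=
  imCLM.hasFDerivAt.comp_hasDerivAt x h

theorem HasDerivAt.complex_conj {f : ℝ → ℂ} {f' : ℂ} {x : ℝ} (h : HasDerivAt f f' x) :
    HasDerivAt (fun u => conj (f u)) (conj f') x :=
  h.star

noncomputable def cayleyField₁ (a b c d : ℂ) : ℂ :=
  a * ((‖a‖ ^ 2 + ‖b‖ ^ 2 + ‖c‖ ^ 2 - ‖d‖ ^ 2 : ℝ) : ℂ)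
    + 2 * (conj (a * d - b * c) + b * c) * conj d

noncomputable def cayleyField₂ (a b c d : ℂ) : ℂ :=
  b * ((‖d‖ ^ 2 + ‖a‖ ^ 2 + ‖b‖ ^ 2 - ‖c‖ ^ 2 : ℝ) : ℂ)
    - 2 * (conj (a * d - b * c) - a * d) * conj c

noncomputable def cayleyField₃ (a b c d : ℂ) : ℂ :=
  c * ((‖c‖ ^ 2 + ‖d‖ ^ 2 + ‖a‖ ^ 2 - ‖b‖ ^ 2 : ℝ) : ℂ)
    - 2 * (conj (a * d - b * c) - a * d) * conj b

noncomputable def cayleyField₄ (a b c d : ℂ) : ℂ :=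
  d * ((‖b‖ ^ 2 + ‖c‖ ^ 2 + ‖d‖ ^ 2 - ‖a‖ ^ 2 : ℝ) : ℂ)
    + 2 * (conj (a * d - b * c) + b * c) * conj a

structure IsCayleyFlow (z₁ z₂ z₃ z₄ : ℝ → ℂ) : Prop where
  hasDerivAt₁ (t : ℝ) : HasDerivAt z₁ (cayleyField₁ (z₁ t) (z₂ t) (z₃ t) (z₄ t)) t
  hasDerivAt₂ (t : ℝ) : HasDerivAt z₂ (cayleyField₂ (z₁ t) (z₂ t) (z₃ t) (z₄ t)) t
  hasDerivAt₃ (t : ℝ) : HasDerivAt z₃ (cayleyField₃ (z₁ t) (z₂ t) (z₃ t) (z₄ t)) t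
  hasDerivAt₄ (t : ℝ) : HasDerivAt z₄ (cayleyField₄ (z₁ t) (z₂ t) (z₃ t) (z₄ t)) t

noncomputable def sqNormSum (z₁ z₂ z₃ z₄ : ℝ → ℂ) (t : ℝ) : ℝ :=
  ‖z₁ t‖ ^ 2 + ‖z₂ t‖ ^ 2 + ‖z₃ t‖ ^ 2 + ‖z₄ t‖ ^ 2

namespace IsCayleyFlow

variable {z₁ z₂ z₃ z₄ : ℝ → ℂ}

theorem hasDerivAt_det (hz : IsCayleyFlow z₁ z₂ z₃ z₄) (t : ℝ) :
    HasDerivAt (fun u => z₁ u * z₄ u - z₂ u * z₃ u)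
      ((2 * sqNormSum z₁ z₂ z₃ z₄ t) • conj (z₁ t * z₄ t - z₂ t * z₃ t)) t := by
  refine (((hz.hasDerivAt₁ t).mul (hz.hasDerivAt₄ t)).sub
    ((hz.hasDerivAt₂ t).mul (hz.hasDerivAt₃ t))).congr_deriv ?_
  simp only [cayleyField₁, cayleyField₂, cayleyField₃, cayleyField₄, sqNormSum, real_smul,
    map_sub, map_mul, ofReal_add, ofReal_sub, ofReal_mul, ofReal_ofNat, Complex.sq_norm,
    ← mul_conj]
  ring

theorem hasDerivAt_rowInner (hz : IsCayleyFlow z₁ z₂ z₃ z₄) (t : ℝ) :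
    HasDerivAt (fun u => z₁ u * conj (z₃ u) + z₂ u * conj (z₄ u))
      ((2 * sqNormSum z₁ z₂ z₃ z₄ t) • (z₁ t * conj (z₃ t) + z₂ t * conj (z₄ t))) t := by
  refine (((hz.hasDerivAt₁ t).mul (hz.hasDerivAt₃ t).complex_conj).add
    ((hz.hasDerivAt₂ t).mul (hz.hasDerivAt₄ t).complex_conj)).congr_deriv ?_
  simp only [cayleyField₁, cayleyField₂, cayleyField₃, cayleyField₄, sqNormSum, real_smul,
    map_sub, map_add, map_mul, map_ofNat, ofReal_add, ofReal_sub, ofReal_mul, ofReal_ofNat,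
    Complex.sq_norm, ← mul_conj, conj_conj]
  ring

theorem hasDerivAt_colInner (hz : IsCayleyFlow z₁ z₂ z₃ z₄) (t : ℝ) :
    HasDerivAt (fun u => z₁ u * conj (z₂ u) + z₃ u * conj (z₄ u))
      ((2 * sqNormSum z₁ z₂ z₃ z₄ t) • (z₁ t * conj (z₂ t) + z₃ t * conj (z₄ t))) t := by
  refine (((hz.hasDerivAt₁ t).mul (hz.hasDerivAt₂ t).complex_conj).add
    ((hz.hasDerivAt₃ t).mul (hz.hasDerivAt₄ t).complex_conj)).congr_deriv ?_
  simp only [cayleyField₁, cayleyField₂, cayleyField₃, cayleyField₄, sqNormSum, real_smul,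
    map_sub, map_add, map_mul, map_ofNat, ofReal_add, ofReal_sub, ofReal_mul, ofReal_ofNat,
    Complex.sq_norm, ← mul_conj, conj_conj]
  ring

theorem hasDerivAt_colNormSqDiff (hz : IsCayleyFlow z₁ z₂ z₃ z₄) (t : ℝ) :
    HasDerivAt (fun u => ‖z₁ u‖ ^ 2 - ‖z₂ u‖ ^ 2 + ‖z₃ u‖ ^ 2 - ‖z₄ u‖ ^ 2)
      (2 * sqNormSum z₁ z₂ z₃ z₄ t * (‖z₁ t‖ ^ 2 - ‖z₂ t‖ ^ 2 + ‖z₃ t‖ ^ 2 - ‖z₄ t‖ ^ 2)) t := by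
  refine ((((hz.hasDerivAt₁ t).norm_sq.sub (hz.hasDerivAt₂ t).norm_sq).add
    (hz.hasDerivAt₃ t).norm_sq).sub (hz.hasDerivAt₄ t).norm_sq).congr_deriv ?_
  simp only [cayleyField₁, cayleyField₂, cayleyField₃, cayleyField₄, sqNormSum, Complex.inner,
    Complex.sq_norm, normSq_apply, mul_re, mul_im, add_re, add_im, sub_re, sub_im, conj_re,
    conj_im, ofReal_re, ofReal_im, re_ofNat, im_ofNat]
  ring

theorem hasDerivAt_re_det (hz : IsCayleyFlow z₁ z₂ z₃ z₄) (t : ℝ) :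
    HasDerivAt (fun u => (z₁ u * z₄ u - z₂ u * z₃ u).re)
      (2 * sqNormSum z₁ z₂ z₃ z₄ t * (z₁ t * z₄ t - z₂ t * z₃ t).re) t :=
  (hz.hasDerivAt_det t).complex_re.congr_deriv (by rw [smul_re, conj_re, smul_eq_mul])

theorem hasDerivAt_im_det (hz : IsCayleyFlow z₁ z₂ z₃ z₄) (t : ℝ) :
    HasDerivAt (fun u => (z₁ u * z₄ u - z₂ u * z₃ u).im)
      (-(2 * sqNormSum z₁ z₂ z₃ z₄ t) * (z₁ t * z₄ t - z₂ t * z₃ t).im) t :=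
  (hz.hasDerivAt_det t).complex_im.congr_deriv (by rw [smul_im, conj_im, smul_eq_mul]; ring)

theorem hasDerivAt_re_rowInner (hz : IsCayleyFlow z₁ z₂ z₃ z₄) (t : ℝ) :
    HasDerivAt (fun u => (z₁ u * conj (z₃ u) + z₂ u * conj (z₄ u)).re)
      (2 * sqNormSum z₁ z₂ z₃ z₄ t * (z₁ t * conj (z₃ t) + z₂ t * conj (z₄ t)).re) t :=
  (hz.hasDerivAt_rowInner t).complex_re.congr_deriv (by rw [smul_re, smul_eq_mul])

theorem hasDerivAt_im_rowInner (hz : IsCayleyFlow z₁ z₂ z₃ z₄) (t : ℝ) :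
    HasDerivAt (fun u => (z₁ u * conj (z₃ u) + z₂ u * conj (z₄ u)).im)
      (2 * sqNormSum z₁ z₂ z₃ z₄ t * (z₁ t * conj (z₃ t) + z₂ t * conj (z₄ t)).im) t :=
  (hz.hasDerivAt_rowInner t).complex_im.congr_deriv (by rw [smul_im, smul_eq_mul])

theorem hasDerivAt_discr (hz : IsCayleyFlow z₁ z₂ z₃ z₄) (t : ℝ) :
    HasDerivAt (fun u => (‖z₁ u‖ ^ 2 - ‖z₂ u‖ ^ 2 + ‖z₃ u‖ ^ 2 - ‖z₄ u‖ ^ 2) ^ 2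
        + 4 * ‖z₁ u * conj (z₂ u) + z₃ u * conj (z₄ u)‖ ^ 2)
      (2 * (2 * sqNormSum z₁ z₂ z₃ z₄ t)
        * ((‖z₁ t‖ ^ 2 - ‖z₂ t‖ ^ 2 + ‖z₃ t‖ ^ 2 - ‖z₄ t‖ ^ 2) ^ 2
          + 4 * ‖z₁ t * conj (z₂ t) + z₃ t * conj (z₄ t)‖ ^ 2)) t :=
  ((hasDerivAt_sq_of_hasDerivAt_mul_self (hz.hasDerivAt_colNormSqDiff t)).add
    ((hasDerivAt_norm_sq_of_hasDerivAt_smul_self (hz.hasDerivAt_colInner t)).const_mul 4)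
    ).congr_deriv (by ring)

end IsCayleyFlow

theorem stmt13
    (z₁ z₂ z₃ z₄ : ℝ → ℂ)
    (h1 : ∀ t, HasDerivAt z₁
      (z₁ t * ((‖z₁ t‖ ^ 2 + ‖z₂ t‖ ^ 2
          + ‖z₃ t‖ ^ 2 - ‖z₄ t‖ ^ 2 : ℝ) : ℂ)
        + 2 * (conj (z₁ t * z₄ t - z₂ t * z₃ t) + z₂ t * z₃ t) * conj (z₄ t)) t)
    (h2 : ∀ t, HasDerivAt z₂
      (z₂ t * ((‖z₄ t‖ ^ 2 + ‖z₁ t‖ ^ 2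
          + ‖z₂ t‖ ^ 2 - ‖z₃ t‖ ^ 2 : ℝ) : ℂ)
        - 2 * (conj (z₁ t * z₄ t - z₂ t * z₃ t) - z₁ t * z₄ t) * conj (z₃ t)) t)
    (h3 : ∀ t, HasDerivAt z₃
      (z₃ t * ((‖z₃ t‖ ^ 2 + ‖z₄ t‖ ^ 2
          + ‖z₁ t‖ ^ 2 - ‖z₂ t‖ ^ 2 : ℝ) : ℂ)
        - 2 * (conj (z₁ t * z₄ t - z₂ t * z₃ t) - z₁ t * z₄ t) * conj (z₂ t)) t)
    (h4 : ∀ t, HasDerivAt z₄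
      (z₄ t * ((‖z₂ t‖ ^ 2 + ‖z₃ t‖ ^ 2
          + ‖z₄ t‖ ^ 2 - ‖z₁ t‖ ^ 2 : ℝ) : ℂ)
        + 2 * (conj (z₁ t * z₄ t - z₂ t * z₃ t) + z₂ t * z₃ t) * conj (z₁ t)) t) :
    (∀ t, ((‖z₁ t‖ ^ 2 - ‖z₂ t‖ ^ 2
          + ‖z₃ t‖ ^ 2 - ‖z₄ t‖ ^ 2) ^ 2
        + 4 * ‖z₁ t * conj (z₂ t) + z₃ t * conj (z₄ t)‖ ^ 2)
        * (z₁ t * z₄ t - z₂ t * z₃ t).im ^ 2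
      = ((‖z₁ 0‖ ^ 2 - ‖z₂ 0‖ ^ 2
          + ‖z₃ 0‖ ^ 2 - ‖z₄ 0‖ ^ 2) ^ 2
        + 4 * ‖z₁ 0 * conj (z₂ 0) + z₃ 0 * conj (z₄ 0)‖ ^ 2)
        * (z₁ 0 * z₄ 0 - z₂ 0 * z₃ 0).im ^ 2)
    ∧ (∀ t, (z₁ t * z₄ t - z₂ t * z₃ t).re * (z₁ t * z₄ t - z₂ t * z₃ t).im
      = (z₁ 0 * z₄ 0 - z₂ 0 * z₃ 0).re * (z₁ 0 * z₄ 0 - z₂ 0 * z₃ 0).im)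
    ∧ (∀ t, (z₁ t * conj (z₃ t) + z₂ t * conj (z₄ t)).re
          * (z₁ t * z₄ t - z₂ t * z₃ t).im
      = (z₁ 0 * conj (z₃ 0) + z₂ 0 * conj (z₄ 0)).re
          * (z₁ 0 * z₄ 0 - z₂ 0 * z₃ 0).im)
    ∧ (∀ t, (z₁ t * conj (z₃ t) + z₂ t * conj (z₄ t)).im
          * (z₁ t * z₄ t - z₂ t * z₃ t).im
      = (z₁ 0 * conj (z₃ 0) + z₂ 0 * conj (z₄ 0)).im
          * (z₁ 0 * z₄ 0 - z₂ 0 * z₃ 0).im) := by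
  have hz : IsCayleyFlow z₁ z₂ z₃ z₄ := ⟨h1, h2, h3, h4⟩
  have hImDetSq (t : ℝ) := hasDerivAt_sq_of_hasDerivAt_mul_self (hz.hasDerivAt_im_det t)
  refine ⟨fun t => ?_, fun t => ?_, fun t => ?_, fun t => ?_⟩
  · exact mul_eq_of_hasDerivAt_mul_self hz.hasDerivAt_discr hImDetSq (fun _ => by ring) t 0
  · exact mul_eq_of_hasDerivAt_mul_self hz.hasDerivAt_re_det hz.hasDerivAt_im_det
      (fun _ => by ring) t 0
  · exact mul_eq_of_hasDerivAt_mul_self hz.hasDerivAt_re_rowInner hz.hasDerivAt_im_det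
      (fun _ => by ring) t 0
  · exact mul_eq_of_hasDerivAt_mul_self hz.hasDerivAt_im_rowInner hz.hasDerivAt_im_det
      (fun _ => by ring) t 0
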